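/- arXiv:0906.5125 — 6 statements merged into one kernel-verified Lean document; each statement's English description precedes it below -/
import Mathlib

section
/- For u, u₀ in the open unit disk of ℂ, one has 1 - |(u - u₀)/(1 - conj(u₀)·u)| ≤ 2|1 - u|/(1 - |u₀|). -/
/-!
Write `τ` for the Möbius map sending `u₀` to `0`. Formally `τ 1 = (1 - u₀) / (1 - conj u₀)` has
modulus one, so `1 - |τ u| ≤ |τ 1 - τ u|`, and the difference of two values of `τ` is
`(1 - u) (1 - |u₀|²) / ((1 - conj u₀) (1 - conj u₀ u))`. Both factors of the denominator are at
least `1 - |u₀|` in modulus, and `1 - |u₀|² ≤ 2 (1 - |u₀|)`.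
-/

open ComplexConjugate

namespace Complex

noncomputable def moebius (a z : ℂ) : ℂ := (z - a) / (1 - conj a * z)

theorem norm_div_conj_self {w : ℂ} (hw : w ≠ 0) : ‖w / conj w‖ = 1 := by
  rw [norm_div, RCLike.norm_conj, div_self (norm_ne_zero_iff.mpr hw)]

theorem one_sub_norm_le_norm_one_sub_conj_mul {a z : ℂ} (hz : ‖z‖ ≤ 1) :
    1 - ‖a‖ ≤ ‖1 - conj a * z‖ := by
  have haz : ‖conj a * z‖ ≤ ‖a‖ := by
    rw [norm_mul, RCLike.norm_conj]
    exact mul_le_of_le_one_right (norm_nonneg a) hz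
  have := norm_sub_norm_le (1 : ℂ) (conj a * z)
  rw [norm_one] at this
  linarith

theorem one_sub_conj_mul_ne_zero {a z : ℂ} (ha : ‖a‖ < 1) (hz : ‖z‖ ≤ 1) :
    1 - conj a * z ≠ 0 :=
  norm_pos_iff.mp <| (sub_pos.mpr ha).trans_le (one_sub_norm_le_norm_one_sub_conj_mul hz)

theorem moebius_sub_moebius {a z w : ℂ} (hz : 1 - conj a * z ≠ 0) (hw : 1 - conj a * w ≠ 0) :
    moebius a w - moebius a z
      = (w - z) * (1 - a * conj a) / ((1 - conj a * w) * (1 - conj a * z)) := by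
  rw [moebius, moebius, div_sub_div _ _ hw hz]
  congr 1
  ring

theorem norm_moebius_sub_moebius {a z w : ℂ} (ha : ‖a‖ ≤ 1) (hz : 1 - conj a * z ≠ 0)
    (hw : 1 - conj a * w ≠ 0) :
    ‖moebius a w - moebius a z‖
      = ‖w - z‖ * (1 - ‖a‖ ^ 2) / (‖1 - conj a * w‖ * ‖1 - conj a * z‖) := by
  have hnum : ‖1 - a * conj a‖ = 1 - ‖a‖ ^ 2 := by
    rw [mul_conj', ← ofReal_pow, ← ofReal_one, ← ofReal_sub, norm_real, Real.norm_eq_abs,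
      abs_of_nonneg (sub_nonneg.mpr (pow_le_one₀ (norm_nonneg a) ha))]
  rw [moebius_sub_moebius hz hw, norm_div, norm_mul, norm_mul, hnum]

theorem norm_moebius_sub_moebius_le {a z w : ℂ} (ha : ‖a‖ < 1) (hz : ‖z‖ ≤ 1) (hw : ‖w‖ ≤ 1) :
    ‖moebius a w - moebius a z‖ ≤ ‖w - z‖ * (1 + ‖a‖) / (1 - ‖a‖) := by
  have hpos : 0 < 1 - ‖a‖ := sub_pos.mpr ha
  have hden : (1 - ‖a‖) * (1 - ‖a‖) ≤ ‖1 - conj a * w‖ * ‖1 - conj a * z‖ :=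
    mul_le_mul (one_sub_norm_le_norm_one_sub_conj_mul hw)
      (one_sub_norm_le_norm_one_sub_conj_mul hz) hpos.le (norm_nonneg _)
  rw [norm_moebius_sub_moebius ha.le (one_sub_conj_mul_ne_zero ha hz)
    (one_sub_conj_mul_ne_zero ha hw)]
  calc ‖w - z‖ * (1 - ‖a‖ ^ 2) / (‖1 - conj a * w‖ * ‖1 - conj a * z‖)
      ≤ ‖w - z‖ * (1 - ‖a‖ ^ 2) / ((1 - ‖a‖) * (1 - ‖a‖)) := by
        gcongr
        exact mul_nonneg (norm_nonneg _) (by nlinarith [norm_nonneg a])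
    _ = ‖w - z‖ * (1 + ‖a‖) / (1 - ‖a‖) := by
        field_simp
        ring

theorem norm_moebius_one {a : ℂ} (ha : ‖a‖ < 1) : ‖moebius a 1‖ = 1 := by
  have h : (1 : ℂ) - a ≠ 0 := sub_ne_zero.mpr (by rintro rfl; simp at ha)
  rw [moebius, mul_one, show (1 : ℂ) - conj a = conj (1 - a) by simp]
  exact norm_div_conj_self h

end Complex

theorem disk_moebius_estimate (u u₀ : ℂ) (hu : ‖u‖ < 1) (hu₀ : ‖u₀‖ < 1) :
    1 - ‖(u - u₀) / (1 - (starRingEnd ℂ) u₀ * u)‖ ≤ 2 * ‖1 - u‖ / (1 - ‖u₀‖) := by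
  set τ := Complex.moebius u₀
  change 1 - ‖τ u‖ ≤ _
  calc 1 - ‖τ u‖
      = ‖τ 1‖ - ‖τ u‖ := by rw [Complex.norm_moebius_one hu₀]
    _ ≤ ‖τ 1 - τ u‖ := norm_sub_norm_le _ _
    _ ≤ ‖1 - u‖ * (1 + ‖u₀‖) / (1 - ‖u₀‖) :=
        Complex.norm_moebius_sub_moebius_le hu₀ hu.le norm_one.le
    _ ≤ 2 * ‖1 - u‖ / (1 - ‖u₀‖) := by
        have hpos : 0 < 1 - ‖u₀‖ := sub_pos.mpr hu₀
        gcongr ?_ / _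
        nlinarith [norm_nonneg (1 - u)]
end

section
/- Let P : ℂ → ℝ be a smooth function with P(z) > 0 for all z ≠ 0 in a neighborhood of 0, vanishing to infinite order at 0 (i.e., P(z)/|z|^N → 0 as z → 0 for every N ≥ 0). Then there do not exist complex numbers a, b with Re a ≠ 0 and b ≠ 0, an integer k > 1, ε₀ > 0, and a function γ : ℂ → ℝ with γ(z) → 0 as z → 0, such that Re[a·P(z) + b·z^k·P'(z)] = γ(z)·P(z) for all 0 < |z| < ε₀. (Here P'(z) denotes ∂P/∂z.) -/
open Complex Filter Metric Topology

noncomputable def wirtingerDeriv (P : ℂ → ℝ) (z : ℂ) : ℂ :=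
  (1 / 2 : ℂ) * ((fderiv ℝ P z 1 : ℝ) - Complex.I * (fderiv ℝ P z Complex.I : ℝ))

lemma clm_decomp (L : ℂ →L[ℝ] ℝ) (w : ℂ) : L w = w.re * L 1 + w.im * L I := by
  conv_lhs => rw [← Complex.re_add_im w]
  have h1 : (w.re : ℂ) = w.re • (1 : ℂ) := by simp [Complex.real_smul]
  have h2 : (w.im : ℂ) * I = w.im • I := by simp [Complex.real_smul]
  rw [h1, h2, map_add, map_smul, map_smul, smul_eq_mul, smul_eq_mul]

lemma re_expand (P : ℂ → ℝ) (a u : ℂ) (z : ℂ) :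
    (a * (P z : ℂ) + u * wirtingerDeriv P z).re
      = a.re * P z + (1/2) * (fderiv ℝ P z u) := by
  rw [clm_decomp (fderiv ℝ P z) u]
  simp [wirtingerDeriv, Complex.add_re, Complex.mul_re, Complex.sub_re, Complex.sub_im,
    Complex.mul_im, Complex.ofReal_re, Complex.ofReal_im]
  ring

theorem no_eigenfunction_eq_P (P : ℂ → ℝ)
    (hsmooth : ContDiff ℝ (⊤ : ℕ∞) P) (hP0 : P 0 = 0)
    (hpos : ∀ᶠ z in 𝓝 (0 : ℂ), z ≠ 0 → 0 < P z)
    (hflat : ∀ N : ℕ, Tendsto (fun z : ℂ => P z / ‖z‖ ^ N) (𝓝[≠] 0) (𝓝 0)) :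
    ¬ ∃ (a b : ℂ) (k : ℕ) (ε₀ : ℝ) (γ : ℂ → ℝ),
        a.re ≠ 0 ∧ b ≠ 0 ∧ 1 < k ∧ 0 < ε₀ ∧
        Tendsto γ (𝓝[≠] 0) (𝓝 0) ∧
        ∀ z : ℂ, 0 < ‖z‖ → ‖z‖ < ε₀ →
          (a * (P z : ℂ) + b * z ^ k * wirtingerDeriv P z).re = γ z * P z := by
  rintro ⟨a, b, k, ε₀, γ, ha, hb, hk, hε₀, hγ, hEq⟩
  -- radius where P is positive
  rw [Metric.eventually_nhds_iff] at hpos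
  obtain ⟨ε₁, hε₁, hpos⟩ := hpos
  -- basic numerics
  have hbpos : (0:ℝ) < ‖b‖ := by
    simpa using hb
  have hk1R : (0:ℝ) < (k:ℝ) - 1 := by
    have : (1:ℝ) < (k:ℝ) := by exact_mod_cast hk
    linarith
  have hk1C : ((k:ℂ) - 1) ≠ 0 := by
    have : ((k:ℝ) - 1) ≠ 0 := ne_of_gt hk1R
    simpa [Complex.ext_iff] using this
  set μ : ℝ := if 0 < a.re then -1 else 1 with hμdef
  have hμsq : μ * μ = 1 := by rw [hμdef]; split <;> norm_num
  have hμabs : |μ| = 1 := by rw [hμdef]; split <;> norm_num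
  have hμa : μ * a.re = -|a.re| := by
    rw [hμdef]; split
    · rename_i h; rw [abs_of_pos h]; ring
    · rename_i h; rw [abs_of_neg (lt_of_le_of_ne (not_lt.1 h) ha)]; ring
  -- the constants of the trajectory
  set c : ℂ := I * (μ:ℂ) * (starRingEnd ℂ) b / (‖b‖ : ℂ) with hcdef
  have hcb : (μ:ℂ) * b * c = I * (‖b‖ : ℝ) := by
    rw [hcdef]
    have hbC : ((‖b‖ : ℝ) : ℂ) ≠ 0 := by
      simpa using ne_of_gt hbpos
    field_simp
    have h1 : ((μ:ℂ)) * (μ:ℂ) = 1 := by exact_mod_cast hμsq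
    have h2 : (starRingEnd ℂ) b * b
        = ((‖b‖ : ℝ) : ℂ) * ((‖b‖ : ℝ) : ℂ) := by
      rw [mul_comm, Complex.mul_conj, Complex.normSq_eq_norm_sq]; push_cast; ring
    linear_combination ((starRingEnd ℂ) b * b) * h1 + h2
  have hc_norm : ‖c‖ = 1 := by
    rw [hcdef]
    rw [norm_div, norm_mul, norm_mul]
    simp [Complex.norm_real, abs_of_pos hbpos, hμabs, div_self hbpos.ne']
  have hc_ne : c ≠ 0 := by
    intro h; rw [h] at hc_norm; simp at hc_norm
  obtain ⟨d, hd⟩ : ∃ d : ℂ, d ^ (k - 1) = c :=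
    IsAlgClosed.exists_pow_nat_eq c (by omega)
  have hd_norm : ‖d‖ = 1 := by
    have h1 : ‖d‖ ^ (k - 1) = 1 ^ (k - 1) := by
      rw [← norm_pow, hd, hc_norm, one_pow]
    exact (pow_left_inj₀ (norm_nonneg d) zero_le_one
      (by omega : k - 1 ≠ 0)).mp h1
  have hd_ne : d ≠ 0 := by
    intro h; rw [h] at hd_norm; simp at hd_norm
  -- geometry: radii
  set δ : ℝ := min ε₀ ε₁ with hδdef
  have hδ : 0 < δ := lt_min hε₀ hε₁
  set R : ℝ := (δ / 2) ^ (-((k:ℝ) - 1)) with hRdef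
  have hR : 0 < R := Real.rpow_pos_of_pos (by linarith) _
  set sr : ℝ := -(1 / ((k:ℝ) - 1)) with hsrdef
  have hsr_neg : sr < 0 := by
    rw [hsrdef]; simp only [neg_neg, neg_lt, neg_zero]
    positivity
  have hRsr : R ^ sr = δ / 2 := by
    rw [hRdef, ← Real.rpow_mul (by linarith : (0:ℝ) ≤ δ / 2)]
    rw [show (-((k:ℝ) - 1)) * sr = 1 from by
      rw [hsrdef]; field_simp]
    exact Real.rpow_one _
  -- trajectory
  set β : ℝ := ((k:ℝ) - 1) * ‖b‖ with hβdef
  have hβ : 0 < β := mul_pos hk1R hbpos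
  set v : ℂ := -(β:ℂ) * I with hvdef
  set ζ : ℝ → ℂ := fun t => (R:ℂ) + t • v with hζdef
  have hζre : ∀ t, (ζ t).re = R := by
    intro t; simp [hζdef, hvdef, Complex.add_re, Complex.smul_re]
  have hζ_slit : ∀ t, ζ t ∈ Complex.slitPlane := by
    intro t; rw [Complex.mem_slitPlane_iff]; left; rw [hζre t]; exact hR
  have hζ_ne : ∀ t, ζ t ≠ 0 := fun t => Complex.slitPlane_ne_zero (hζ_slit t)
  have hζ_abs : ∀ t, R ≤ ‖ζ t‖ := by
    intro t
    calc R = (ζ t).re := (hζre t).symm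
    _ ≤ ‖ζ t‖ := Complex.re_le_norm _
  have hζ_deriv : ∀ t, HasDerivAt ζ v t := by
    intro t
    have h1 : HasDerivAt (fun t : ℝ => t • v) ((1:ℝ) • v) t :=
      (hasDerivAt_id t).smul_const v
    simpa [hζdef] using h1.const_add (R:ℂ)
  -- the curve z
  set s : ℂ := ((sr : ℝ) : ℂ) with hsdef
  have hsk : (k:ℂ) * s = s - 1 := by
    rw [hsdef, hsrdef]
    have : ((k:ℝ):ℂ) - 1 ≠ 0 := by
      rw [show ((k:ℝ):ℂ) = (k:ℂ) from by push_cast; ring]; exact hk1C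
    push_cast
    field_simp
    ring
  set z : ℝ → ℂ := fun t => d * ζ t ^ s with hzdef
  have hz_ne : ∀ t, z t ≠ 0 := by
    intro t
    rw [hzdef]
    refine mul_ne_zero hd_ne ?_
    rw [Ne, Complex.cpow_eq_zero_iff]
    tauto
  have hz_abs : ∀ t, ‖z t‖ = ‖ζ t‖ ^ sr := by
    intro t
    rw [hzdef]
    simp only [norm_mul, hd_norm, one_mul, hsdef]
    exact Complex.norm_cpow_real _ _
  have hz_small : ∀ t, ‖z t‖ ≤ δ / 2 := by
    intro t
    rw [hz_abs t, ← hRsr]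
    exact Real.rpow_le_rpow_of_nonpos hR (hζ_abs t) hsr_neg.le
  have hz_lt : ∀ t, ‖z t‖ < δ := fun t =>
    lt_of_le_of_lt (hz_small t) (by linarith)
  -- z tends to 0
  have hζ_top : Tendsto (fun t => ‖ζ t‖) atTop atTop := by
    refine tendsto_atTop_mono (fun t => ?_) (Tendsto.const_mul_atTop hβ tendsto_id)
    have him : (ζ t).im = -(β * t) := by
      simp [hζdef, hvdef, Complex.add_im, Complex.smul_im]; ring
    calc β * t ≤ |(ζ t).im| := by rw [him, abs_neg]; exact le_abs_self _
    _ ≤ ‖ζ t‖ := Complex.abs_im_le_norm _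
  have hz_tendsto : Tendsto z atTop (𝓝 0) := by
    rw [tendsto_zero_iff_norm_tendsto_zero]
    have h1 : Tendsto (fun x : ℝ => x ^ sr) atTop (𝓝 0) := by
      rw [hsrdef]; exact tendsto_rpow_neg_atTop (by positivity)
    have h2 := h1.comp hζ_top
    refine h2.congr (fun t => ?_)
    simp only [Function.comp]
    rw [← hz_abs t]
  -- derivative of z
  have hsv : s * v = I * ((‖b‖ : ℝ) : ℂ) := by
    rw [hsdef, hvdef, hsrdef, hβdef]
    have hkc : ((k:ℝ):ℂ) - 1 ≠ 0 := by
      rw [show ((k:ℝ):ℂ) = (k:ℂ) from by push_cast; ring]; exact hk1C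
    push_cast
    field_simp
  have hzk : ∀ t, z t ^ k = d ^ k * ζ t ^ (s - 1) := by
    intro t
    rw [hzdef]
    simp only
    rw [mul_pow, ← Complex.cpow_nat_mul, hsk]
  have hdk : d ^ k = d ^ (k - 1) * d := by
    rw [← pow_succ]; congr 1; omega
  have hz_deriv : ∀ t, HasDerivAt z ((μ:ℂ) * (b * z t ^ k)) t := by
    intro t
    have h1 : HasDerivAt (fun u : ℝ => ζ u ^ s) (v • (s * ζ t ^ (s - 1))) t :=
      HasDerivAt.scomp (x := t)
        (Complex.hasStrictDerivAt_cpow_const (hζ_slit t)).hasDerivAt (hζ_deriv t)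
    have h2 := h1.const_mul d
    refine h2.congr_deriv ?_
    symm
    rw [smul_eq_mul, hzk t, hdk, hd]
    linear_combination (d * ζ t ^ (s - 1)) * hcb - (d * ζ t ^ (s - 1)) * hsv
  -- the function F
  have hdiffP : Differentiable ℝ P := hsmooth.differentiable (by simp)
  set F : ℝ → ℝ := fun t => P (z t) with hFdef
  have hz_norm_pos : ∀ t, 0 < ‖z t‖ := fun t => norm_pos_iff.mpr (hz_ne t)
  have habs_a : 0 < |a.re| := abs_pos.mpr ha
  have hF_deriv : ∀ t, HasDerivAt F ((2 * μ * γ (z t) + 2 * |a.re|) * F t) t := by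
    intro t
    have hnorm_lt : ‖z t‖ < ε₀ := by
      exact lt_of_lt_of_le (hz_lt t) (min_le_left _ _)
    have heq := hEq (z t) (hz_norm_pos t) hnorm_lt
    rw [re_expand] at heq
    have hLu : fderiv ℝ P (z t) (b * z t ^ k)
        = 2 * γ (z t) * P (z t) - 2 * a.re * P (z t) := by linarith
    have hF := ((hdiffP (z t)).hasFDerivAt).comp_hasDerivAt t (hz_deriv t)
    refine hF.congr_deriv ?_
    symm
    have hsmul : (μ:ℂ) * (b * z t ^ k) = μ • (b * z t ^ k) := by
      rw [Complex.real_smul]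
    rw [hsmul, map_smul, smul_eq_mul, hLu]
    simp only [hFdef]
    linear_combination 2 * P (z t) * hμa
  have hFpos : ∀ t, 0 < F t := by
    intro t
    refine hpos ?_ (hz_ne t)
    rw [dist_zero_right]
    exact lt_of_lt_of_le (hz_lt t) (min_le_right _ _)
  have hF0 : Tendsto F atTop (𝓝 0) := by
    have h1 := (hsmooth.continuous.tendsto 0).comp hz_tendsto
    rw [hP0] at h1
    exact h1
  have hγz : Tendsto (fun t => γ (z t)) atTop (𝓝 0) := by
    refine hγ.comp (tendsto_nhdsWithin_iff.mpr ⟨hz_tendsto, ?_⟩)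
    exact Eventually.of_forall fun t => hz_ne t
  have hev : ∀ᶠ t in atTop, |γ (z t)| < |a.re| / 2 := by
    have h1 := Metric.tendsto_nhds.mp hγz (|a.re| / 2) (by positivity)
    refine h1.mono fun t ht => ?_
    rwa [dist_zero_right, Real.norm_eq_abs] at ht
  obtain ⟨T, hT⟩ := eventually_atTop.mp hev
  have hFdiff : Differentiable ℝ F := fun t => (hF_deriv t).differentiableAt
  have hderiv_pos : ∀ t ∈ interior (Set.Ici T), 0 < deriv F t := by
    intro t ht
    rw [interior_Ici] at ht
    rw [(hF_deriv t).deriv]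
    have h1 : |γ (z t)| < |a.re| / 2 := hT t (le_of_lt ht)
    have h2 : -(|a.re| / 2) < μ * γ (z t) := by
      have h3 : |μ * γ (z t)| = |γ (z t)| := by rw [abs_mul, hμabs, one_mul]
      nlinarith [neg_abs_le (μ * γ (z t))]
    have h4 : 0 < 2 * μ * γ (z t) + 2 * |a.re| := by nlinarith
    exact mul_pos h4 (hFpos t)
  have hmono : StrictMonoOn F (Set.Ici T) :=
    strictMonoOn_of_deriv_pos (convex_Ici T) hFdiff.continuous.continuousOn hderiv_pos
  obtain ⟨t₂, h2, h3⟩ :=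
    ((hF0.eventually (gt_mem_nhds (hFpos (T + 1)))).and (eventually_ge_atTop (T + 2))).exists
  have h4 : F (T + 1) < F t₂ := by
    refine hmono ?_ ?_ ?_
    · simp only [Set.mem_Ici]; linarith
    · simp only [Set.mem_Ici]; linarith
    · linarith
  exact absurd h2 (by linarith)
end

section
/- Let P : ℂ → ℝ be a smooth function, strictly positive away from 0 near the origin, vanishing to infinite order at 0. Then for any integer n ≥ 1, there do not exist complex numbers a, b with Re a ≠ 0 and b ≠ 0, an integer k > 1, ε₀ > 0, and a function γ with γ(z) → 0 as z → 0, such that Re[a·P(z)^{n+1} + b·z^k·P'(z)] = γ(z)·P(z)^{n+1} for all 0 < |z| < ε₀. -/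
open Complex Filter Metric Topology

private lemma wirtinger_re (P : ℂ → ℝ) (z w : ℂ) :
    (w * wirtingerDeriv P z).re = fderiv ℝ P z w / 2 := by
  have hw : fderiv ℝ P z w
      = w.re * fderiv ℝ P z 1 + w.im * fderiv ℝ P z Complex.I := by
    have h : w = w.re • (1 : ℂ) + w.im • Complex.I := by
      simp [Complex.ext_iff]
    conv_lhs => rw [h]
    rw [map_add, map_smul, map_smul]
    simp [smul_eq_mul]
  rw [hw]
  simp [wirtingerDeriv, Complex.mul_re, Complex.mul_im]
  ring

private lemma deriv_bound_le (g d : ℝ → ℝ) (K : ℝ)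
    (hg : ∀ t ∈ Set.Ici (0:ℝ), HasDerivAt g (d t) t)
    (hd : ∀ t ∈ Set.Ici (0:ℝ), d t ≤ K) :
    ∀ t ∈ Set.Ici (0:ℝ), g t ≤ g 0 + K * t := by
  intro t ht
  set h : ℝ → ℝ := fun x => g 0 + K * x - g x with hh_def
  have hh : ∀ x ∈ Set.Ici (0:ℝ), HasDerivAt h (K - d x) x := by
    intro x hx
    have h1 : HasDerivAt (fun x : ℝ => g 0 + K * x) K x := by
      simpa using ((hasDerivAt_id x).const_mul K).const_add (g 0)
    exact h1.sub (hg x hx)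
  have mono : MonotoneOn h (Set.Ici 0) := by
    apply monotoneOn_of_deriv_nonneg (convex_Ici 0)
    · exact fun x hx => (hh x hx).continuousAt.continuousWithinAt
    · intro x hx
      rw [interior_Ici] at hx
      exact (hh x (Set.mem_Ici.mpr (le_of_lt hx))).differentiableAt.differentiableWithinAt
    · intro x hx
      rw [interior_Ici] at hx
      rw [(hh x (Set.mem_Ici.mpr (le_of_lt hx))).deriv]
      linarith [hd x (Set.mem_Ici.mpr (le_of_lt hx))]
  have h0 := mono Set.self_mem_Ici ht ht
  simp only [hh_def, mul_zero, add_zero] at h0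
  linarith

theorem no_eigenfunction_eq_P_pow (P : ℂ → ℝ) (n : ℕ) (hn : 1 ≤ n)
    (hsmooth : ContDiff ℝ (⊤ : ℕ∞) P) (hP0 : P 0 = 0)
    (hpos : ∀ᶠ z in 𝓝 (0 : ℂ), z ≠ 0 → 0 < P z)
    (hflat : ∀ N : ℕ, Tendsto (fun z : ℂ => P z / ‖z‖ ^ N) (𝓝[≠] 0) (𝓝 0)) :
    ¬ ∃ (a b : ℂ) (k : ℕ) (ε₀ : ℝ) (γ : ℂ → ℝ),
        a.re ≠ 0 ∧ b ≠ 0 ∧ 1 < k ∧ 0 < ε₀ ∧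
        Tendsto γ (𝓝[≠] 0) (𝓝 0) ∧
        ∀ z : ℂ, 0 < ‖z‖ → ‖z‖ < ε₀ →
          (a * ((P z : ℂ)) ^ (n + 1) + b * z ^ k * wirtingerDeriv P z).re
            = γ z * (P z) ^ (n + 1) := by
  rintro ⟨a, b, k, ε₀, γ, ha, hb, hk, hε₀, hγ, heq⟩
  set A := |a.re| with hA
  have hApos : 0 < A := abs_pos.mpr ha
  -- positivity radius
  obtain ⟨δ₁, hδ₁, hδ₁P⟩ : ∃ δ > 0, ∀ z : ℂ, ‖z‖ < δ → z ≠ 0 → 0 < P z := by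
    rcases Metric.eventually_nhds_iff.mp hpos with ⟨δ, hδ, h⟩
    exact ⟨δ, hδ, fun z hz => h (by simpa [dist_eq_norm] using hz)⟩
  -- gamma smallness radius
  obtain ⟨δ₂, hδ₂, hδ₂γ⟩ : ∃ δ > 0, ∀ z : ℂ, z ≠ 0 → ‖z‖ < δ → |γ z| < A / 2 := by
    have h2 : ∀ᶠ z in 𝓝[≠] (0:ℂ), |γ z| < A / 2 := by
      have := Metric.tendsto_nhds.mp hγ (A / 2) (by positivity)
      simpa [Real.dist_eq] using this
    rw [eventually_nhdsWithin_iff] at h2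
    rcases Metric.eventually_nhds_iff.mp h2 with ⟨δ, hδ, h⟩
    exact ⟨δ, hδ, fun z hz hzδ => h (by simpa [dist_eq_norm] using hzδ) hz⟩
  set ε₁ := min ε₀ (min δ₁ δ₂) with hε₁def
  have hε₁pos : 0 < ε₁ := lt_min hε₀ (lt_min hδ₁ hδ₂)
  have key : ∀ z : ℂ, z ≠ 0 → ‖z‖ < ε₁ →
      0 < P z ∧ |γ z| < A / 2 ∧
      fderiv ℝ P z (b * z ^ k) = 2 * (γ z - a.re) * P z ^ (n + 1) := by
    intro z hz hzlt
    have hz0 : 0 < ‖z‖ := norm_pos_iff.mpr hz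
    have h1 : 0 < P z := hδ₁P z (lt_of_lt_of_le hzlt (le_trans (min_le_right _ _) (min_le_left _ _))) hz
    have h2 : |γ z| < A / 2 := hδ₂γ z hz (lt_of_lt_of_le hzlt (le_trans (min_le_right _ _) (min_le_right _ _)))
    refine ⟨h1, h2, ?_⟩
    have h := heq z hz0 (lt_of_lt_of_le hzlt (min_le_left _ _))
    have e1 : (a * ((P z : ℂ)) ^ (n + 1)).re = a.re * P z ^ (n + 1) := by
      rw [← Complex.ofReal_pow, Complex.mul_re, Complex.ofReal_re, Complex.ofReal_im]
      ring
    have e2 : (b * z ^ k * wirtingerDeriv P z).re = fderiv ℝ P z (b * z ^ k) / 2 :=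
      wirtinger_re P z (b * z ^ k)
    rw [Complex.add_re, e1, e2] at h
    linarith
  -- root α
  have hk1C : ((k : ℂ) - 1) ≠ 0 := by
    have : ((k : ℂ)) ≠ 1 := by exact_mod_cast (by omega : (k : ℕ) ≠ 1)
    exact sub_ne_zero.mpr this
  obtain ⟨α, hα⟩ := IsAlgClosed.exists_pow_nat_eq (k := ℂ)
    (-1 / (((k : ℂ) - 1) * b)) (n := k - 1) (by omega)
  have hαne : α ≠ 0 := by
    intro h
    rw [h, zero_pow (by omega : k - 1 ≠ 0)] at hα
    exact (div_ne_zero (neg_ne_zero.mpr one_ne_zero) (mul_ne_zero hk1C hb)) hα.symm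
  set q : ℝ := -(1 / ((k : ℝ) - 1)) with hqdef
  have hk1R : (0:ℝ) < (k : ℝ) - 1 := by
    have : (2:ℝ) ≤ (k:ℝ) := by exact_mod_cast hk
    linarith
  have hqneg : q < 0 := by
    rw [hqdef]; rw [neg_lt, neg_zero]; positivity
  have hq : q * ((k : ℝ) - 1) = -1 := by
    rw [hqdef]; field_simp
  -- choose s
  obtain ⟨s, hs1, hsε⟩ : ∃ s : ℝ, 1 ≤ s ∧ ‖α‖ * s ^ q < ε₁ := by
    have ht : Tendsto (fun s : ℝ => ‖α‖ * s ^ q) atTop (𝓝 0) := by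
      have := (tendsto_rpow_neg_atTop (y := 1 / ((k:ℝ) - 1)) (by positivity)).const_mul ‖α‖
      simpa [hqdef] using this
    rcases ((ht.eventually_lt_const hε₁pos).and (eventually_ge_atTop 1)).exists with ⟨s, h, h'⟩
    exact ⟨s, h', h⟩
  set u : ℝ → ℝ := fun t => (s + t) ^ q with hudef
  set Z : ℝ → ℂ := fun t => α * ((u t : ℝ) : ℂ) with hZdef
  have hx : ∀ t ∈ Set.Ici (0:ℝ), 0 < s + t := fun t ht => by
    have : (0:ℝ) ≤ t := ht; linarith
  have hupos : ∀ t ∈ Set.Ici (0:ℝ), 0 < u t := fun t ht =>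
    Real.rpow_pos_of_pos (hx t ht) q
  have hZne : ∀ t ∈ Set.Ici (0:ℝ), Z t ≠ 0 := fun t ht =>
    mul_ne_zero hαne (by exact_mod_cast (hupos t ht).ne')
  have hZnorm : ∀ t ∈ Set.Ici (0:ℝ), ‖Z t‖ = ‖α‖ * u t := fun t ht => by
    rw [hZdef]
    simp only [norm_mul, Complex.norm_real, Real.norm_eq_abs, abs_of_pos (hupos t ht)]
  have hZlt : ∀ t ∈ Set.Ici (0:ℝ), ‖Z t‖ < ε₁ := by
    intro t ht
    rw [hZnorm t ht]
    have h1 : u t ≤ s ^ q := by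
      apply Real.rpow_le_rpow_of_nonpos ?_ ?_ hqneg.le
      · linarith
      · have : (0:ℝ) ≤ t := ht; linarith
    calc ‖α‖ * u t ≤ ‖α‖ * s ^ q := by
          exact mul_le_mul_of_nonneg_left h1 (norm_nonneg α)
      _ < ε₁ := hsε
  have hZderiv : ∀ t ∈ Set.Ici (0:ℝ), HasDerivAt Z (b * Z t ^ k) t := by
    intro t ht
    have hxt := hx t ht
    have hu : HasDerivAt u (q * (s + t) ^ (q - 1)) t := by
      have h1 : HasDerivAt (fun t : ℝ => s + t) 1 t := (hasDerivAt_id t).const_add s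
      have h2 := Real.hasDerivAt_rpow_const (x := s + t) (p := q) (Or.inl hxt.ne')
      simpa [hudef, Function.comp_def] using h2.comp t h1
    have hz : HasDerivAt Z (α * (((q * (s + t) ^ (q - 1) : ℝ)) : ℂ)) t :=
      hu.ofReal_comp.const_mul α
    have hak : α ^ k = α ^ (k - 1) * α := by
      rw [← pow_succ]; congr 1; omega
    have hbk : b * α ^ k = (q : ℂ) * α := by
      rw [hak, show b * (α ^ (k - 1) * α) = (α ^ (k - 1) * b) * α from by ring, hα]
      have h3 : (-1 / (((k:ℂ) - 1) * b)) * b = (q : ℂ) := by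
        rw [hqdef]; push_cast; field_simp
      rw [h3]
    have hrp : ((s + t) ^ q) ^ k = (s + t) ^ (q - 1) := by
      rw [← Real.rpow_natCast ((s + t) ^ q) k, ← Real.rpow_mul hxt.le]
      congr 1
      nlinarith [hq]
    have heqd : b * Z t ^ k = α * (((q * (s + t) ^ (q - 1) : ℝ)) : ℂ) := by
      calc b * Z t ^ k = (b * α ^ k) * (((((s + t) ^ q) ^ k : ℝ)) : ℂ) := by
            simp only [hZdef, hudef]; push_cast; ring
        _ = (q : ℂ) * α * (((s + t) ^ (q - 1) : ℝ) : ℂ) := by rw [hbk, hrp]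
        _ = α * (((q * (s + t) ^ (q - 1) : ℝ)) : ℂ) := by push_cast; ring
    rw [← heqd] at hz
    exact hz
  set f : ℝ → ℝ := fun t => P (Z t) with hfdef
  set c : ℝ → ℝ := fun t => γ (Z t) - a.re with hcdef
  have hfpos : ∀ t ∈ Set.Ici (0:ℝ), 0 < f t := fun t ht =>
    (key (Z t) (hZne t ht) (hZlt t ht)).1
  have hγb : ∀ t ∈ Set.Ici (0:ℝ), |γ (Z t)| < A / 2 := fun t ht =>
    (key (Z t) (hZne t ht) (hZlt t ht)).2.1
  have hf : ∀ t ∈ Set.Ici (0:ℝ), HasDerivAt f (2 * c t * f t ^ (n + 1)) t := by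
    intro t ht
    have hPd : HasFDerivAt P (fderiv ℝ P (Z t)) (Z t) :=
      ((hsmooth.differentiable (by simp)) (Z t)).hasFDerivAt
    have h := hPd.comp_hasDerivAt t (hZderiv t ht)
    have hkey := (key (Z t) (hZne t ht) (hZlt t ht)).2.2
    rw [hkey] at h
    exact h
  set g : ℝ → ℝ := fun t => (f t ^ n)⁻¹ with hgdef
  have hgpos : ∀ t ∈ Set.Ici (0:ℝ), 0 < g t := fun t ht => by
    simp only [hgdef]
    exact inv_pos.mpr (pow_pos (hfpos t ht) n)
  have hg : ∀ t ∈ Set.Ici (0:ℝ), HasDerivAt g (-(2 * n) * c t) t := by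
    intro t ht
    have hfne : f t ≠ 0 := (hfpos t ht).ne'
    have h1 := ((hf t ht).pow n).inv (pow_ne_zero n hfne)
    refine h1.congr_deriv ?_
    symm
    have e : f t ^ (n - 1) * f t ^ (n + 1) = (f t ^ n) ^ 2 := by
      rw [← pow_add, ← pow_mul]
      congr 1
      omega
    simp only [Pi.pow_apply]
    rw [eq_div_iff (pow_ne_zero 2 (pow_ne_zero n hfne)), ← e]
    ring
  rcases ha.lt_or_gt with haneg | hapos
  · -- a.re < 0 : blow-up
    have hAeq : A = -a.re := abs_of_neg haneg
    have hK : ∀ t ∈ Set.Ici (0:ℝ), -(2 * (n:ℝ)) * c t ≤ -((n:ℝ) * A) := by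
      intro t ht
      have h1 : γ (Z t) ≥ -(A / 2) := neg_le_of_abs_le (hγb t ht).le
      have h2 : c t ≥ A / 2 := by
        simp only [hcdef]
        rw [hAeq] at h1 ⊢
        linarith
      have hn1 : (1:ℝ) ≤ (n:ℝ) := by exact_mod_cast hn
      have h4 := mul_le_mul_of_nonneg_left h2 (show (0:ℝ) ≤ 2 * (n:ℝ) by positivity)
      calc -(2 * (n:ℝ)) * c t = -(2 * (n:ℝ) * c t) := by ring
        _ ≤ -(2 * (n:ℝ) * (A / 2)) := neg_le_neg h4
        _ = -((n:ℝ) * A) := by ring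
    have hbound := deriv_bound_le g _ (-((n:ℝ) * A)) hg hK
    have hnA : 0 < (n:ℝ) * A := by
      have hn1 : (1:ℝ) ≤ (n:ℝ) := by exact_mod_cast hn
      nlinarith
    set t₁ : ℝ := g 0 / ((n:ℝ) * A) + 1 with ht₁def
    have ht₁ : t₁ ∈ Set.Ici (0:ℝ) := by
      have := hgpos 0 Set.self_mem_Ici
      have : 0 ≤ g 0 / ((n:ℝ) * A) := by positivity
      simp only [Set.mem_Ici, ht₁def]
      linarith
    have h1 := hbound t₁ ht₁
    have h2 := hgpos t₁ ht₁
    have h3 : ((n:ℝ) * A) * (g 0 / ((n:ℝ) * A)) = g 0 := mul_div_cancel₀ _ hnA.ne'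
    rw [ht₁def] at h1
    nlinarith
  · -- a.re > 0 : flatness contradiction
    have hAeq : A = a.re := abs_of_pos hapos
    set C : ℝ := 3 * (n:ℝ) * A with hCdef
    have hn1 : (1:ℝ) ≤ (n:ℝ) := by exact_mod_cast hn
    have hnpos : (0:ℝ) < (n:ℝ) := by exact_mod_cast Nat.lt_of_lt_of_le Nat.zero_lt_one hn
    have hCpos : 0 < C := by rw [hCdef]; positivity
    have hK : ∀ t ∈ Set.Ici (0:ℝ), -(2 * (n:ℝ)) * c t ≤ C := by
      intro t ht
      have h1 : γ (Z t) ≥ -(A / 2) := neg_le_of_abs_le (hγb t ht).le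
      have h2 : c t ≥ -(3 * A / 2) := by
        simp only [hcdef]
        rw [hAeq] at h1 ⊢
        linarith
      have h3 : -c t ≤ 3 * A / 2 := by linarith
      have h4 := mul_le_mul_of_nonneg_left h3 (show (0:ℝ) ≤ 2 * (n:ℝ) by positivity)
      rw [hCdef]
      calc -(2 * (n:ℝ)) * c t = 2 * (n:ℝ) * -c t := by ring
        _ ≤ 2 * (n:ℝ) * (3 * A / 2) := h4
        _ = 3 * (n:ℝ) * A := by ring
    have hbound := deriv_bound_le g _ C hg hK
    set N : ℕ := 2 * n * (k - 1) with hNdef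
    -- Z tends to 0 within punctured nbhd
    have hZt : Tendsto Z atTop (𝓝[≠] (0:ℂ)) := by
      have hu0 : Tendsto u atTop (𝓝 0) := by
        have h1 : Tendsto (fun t : ℝ => s + t) atTop atTop :=
          tendsto_atTop_add_const_left atTop s tendsto_id
        have h2 : Tendsto (fun x : ℝ => x ^ q) atTop (𝓝 0) := by
          have := tendsto_rpow_neg_atTop (y := 1 / ((k:ℝ) - 1)) (by positivity)
          simpa [hqdef] using this
        exact h2.comp h1
      have hZ0 : Tendsto Z atTop (𝓝 0) := by
        have := ((Complex.continuous_ofReal.tendsto 0).comp hu0).const_mul α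
        simpa [hZdef] using this
      apply tendsto_nhdsWithin_of_tendsto_nhds_of_eventually_within _ hZ0
      filter_upwards [eventually_ge_atTop (0:ℝ)] with t ht
      exact hZne t ht
    have hev : ∀ᶠ t in atTop, P (Z t) / ‖Z t‖ ^ N < 1 :=
      hZt.eventually ((hflat N).eventually_lt_const one_pos)
    obtain ⟨T, hT⟩ := eventually_atTop.mp hev
    set M : ℝ := ‖α‖ ^ (N * n) with hMdef
    have hMpos : 0 < M := by
      rw [hMdef]
      exact pow_pos (norm_pos_iff.mpr hαne) _
    set D : ℝ := M * (g 0 + C) with hDdef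
    have hg0pos : 0 < g 0 := hgpos 0 Set.self_mem_Ici
    have hDpos : 0 < D := by rw [hDdef]; positivity
    set t₀ : ℝ := max T (max 0 D) with ht₀def
    have ht₀0 : t₀ ∈ Set.Ici (0:ℝ) := by
      simp only [Set.mem_Ici, ht₀def]
      exact le_trans (le_max_left 0 D) (le_max_right _ _)
    have ht₀T : T ≤ t₀ := le_max_left _ _
    have ht₀D : D ≤ t₀ := le_trans (le_max_right 0 D) (le_max_right _ _)
    set x : ℝ := s + t₀ with hxdef
    have hx1 : 1 ≤ x := by
      have : (0:ℝ) ≤ t₀ := ht₀0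
      rw [hxdef]; linarith
    have hxpos : 0 < x := lt_of_lt_of_le one_pos hx1
    -- flatness bound
    have hPb : P (Z t₀) < ‖Z t₀‖ ^ N := by
      have h1 := hT t₀ ht₀T
      have h2 : 0 < ‖Z t₀‖ ^ N := pow_pos (norm_pos_iff.mpr (hZne t₀ ht₀0)) N
      exact (div_lt_one h2).mp h1
    have hfb : f t₀ ^ n ≤ (‖Z t₀‖ ^ N) ^ n :=
      pow_le_pow_left₀ (hfpos t₀ ht₀0).le hPb.le n
    have hgb2 := hbound t₀ ht₀0
    have hCt₀ : 0 ≤ C * t₀ := mul_nonneg hCpos.le ht₀0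
    have hGpos : 0 < g 0 + C * t₀ := by linarith
    have h2inv : (g 0 + C * t₀)⁻¹ ≤ f t₀ ^ n := by
      have h := inv_anti₀ (hgpos t₀ ht₀0) hgb2
      simpa [hgdef, inv_inv] using h
    have hZnormval : ‖Z t₀‖ = ‖α‖ * x ^ q := by
      rw [hZnorm t₀ ht₀0]
    have hqN : q * (N : ℝ) = -(2 * (n:ℝ)) := by
      have hNcast : (N : ℝ) = 2 * (n:ℝ) * ((k:ℝ) - 1) := by
        rw [hNdef]
        push_cast [Nat.cast_sub hk.le]
        ring
      rw [hNcast, show q * (2 * (n:ℝ) * ((k:ℝ) - 1)) = 2 * (n:ℝ) * (q * ((k:ℝ) - 1)) from by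
        ring, hq]
      ring
    have hxq : (x ^ q) ^ N = (x ^ (2 * n) : ℝ)⁻¹ := by
      rw [← Real.rpow_natCast (x ^ q) N, ← Real.rpow_mul hxpos.le, hqN,
        Real.rpow_neg hxpos.le]
      congr 1
      rw [← Real.rpow_natCast x (2 * n)]
      congr 1
      push_cast
      ring
    have hfinal1 : (‖Z t₀‖ ^ N) ^ n = M * (x ^ (2 * n * n))⁻¹ := by
      rw [hZnormval, mul_pow, hxq, mul_pow, ← pow_mul, hMdef, inv_pow, ← pow_mul]
    have hxm : 0 < x ^ (2 * n * n) := pow_pos hxpos _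
    have hchain : (g 0 + C * t₀)⁻¹ ≤ M * (x ^ (2 * n * n))⁻¹ := by
      rw [← hfinal1]
      exact le_trans h2inv hfb
    have hineq : x ^ (2 * n * n) ≤ M * (g 0 + C * t₀) := by
      rw [← div_eq_mul_inv, ← one_div] at hchain
      have := (div_le_div_iff₀ hGpos hxm).mp hchain
      linarith
    have h5 : x ^ 2 ≤ x ^ (2 * n * n) := by
      apply pow_le_pow_right₀ hx1
      simpa using Nat.mul_le_mul (Nat.mul_le_mul (le_refl 2) hn) hn
    have h6 : g 0 + C * t₀ ≤ (g 0 + C) * x := by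
      have ht₀x : t₀ ≤ x := by
        rw [hxdef]; linarith
      have e1 : C * t₀ ≤ C * x := mul_le_mul_of_nonneg_left ht₀x hCpos.le
      have e2 : g 0 * 1 ≤ g 0 * x := mul_le_mul_of_nonneg_left hx1 hg0pos.le
      linarith [e1, e2]
    have h7 : x ^ 2 ≤ D * x := by
      calc x ^ 2 ≤ x ^ (2 * n * n) := h5
        _ ≤ M * (g 0 + C * t₀) := hineq
        _ ≤ M * ((g 0 + C) * x) := by
            exact mul_le_mul_of_nonneg_left h6 hMpos.le
        _ = D * x := by rw [hDdef]; ring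
    have h8 : D + 1 ≤ x := by
      rw [hxdef]; linarith
    have e3 : (D + 1) * x ≤ x * x := mul_le_mul_of_nonneg_right h8 hxpos.le
    linarith [e3, h7, hx1]
end

section
/- Let P : ℂ → ℝ be a smooth function, strictly positive away from 0 near the origin, vanishing to infinite order at 0. Then for any integer n ≥ 0, there do not exist complex numbers a, b with Re a ≠ 0 and b ≠ 0, ε₀ > 0, and a function γ with γ(z) → 0 as z → 0, such that Re[a·P(z)^{n+1} + b·z·P'(z)] = γ(z)·P(z)^{n+1} for all 0 < |z| < ε₀. -/
open Complex Filter Metric Topology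

lemma fderiv_eq_re_wirtinger (P : ℂ → ℝ) (z v : ℂ) :
    fderiv ℝ P z v = (2 * wirtingerDeriv P z * v).re := by
  have hv : v = v.re • (1:ℂ) + v.im • Complex.I := by
    simp [Complex.real_smul, Complex.re_add_im]
  rw [hv, map_add, map_smul, map_smul]
  simp [wirtingerDeriv, Complex.mul_re, Complex.mul_im, smul_eq_mul]
  ring

lemma hasDerivAt_P_flow (P : ℂ → ℝ) (hP : ContDiff ℝ (⊤ : ℕ∞) P) (z₀ c : ℂ) (t : ℝ) :
    HasDerivAt (fun s : ℝ => P (z₀ * Complex.exp (c * s)))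
      ((2 * wirtingerDeriv P (z₀ * Complex.exp (c*t)) * (c * (z₀ * Complex.exp (c*t)))).re) t := by
  have h1 : HasDerivAt (fun s : ℂ => Complex.exp (c * s)) (Complex.exp (c*(t:ℂ)) * c) (t:ℂ) := by
    simpa using ((hasDerivAt_id ((t:ℝ):ℂ)).const_mul c).cexp
  have h2 := (h1.comp_ofReal).const_mul z₀
  have hw : HasDerivAt (fun s : ℝ => z₀ * Complex.exp (c * s)) (c * (z₀ * Complex.exp (c*(t:ℂ)))) t := by
    rw [show c * (z₀ * Complex.exp (c*(t:ℂ))) = z₀ * (Complex.exp (c*(t:ℂ)) * c) by ring]; exact h2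
  have hfd := ((hP.differentiable (by simp)) (z₀ * Complex.exp (c*(t:ℂ)))).hasFDerivAt
  have h3 := hfd.comp_hasDerivAt t hw
  rw [← fderiv_eq_re_wirtinger]
  exact h3

set_option maxHeartbeats 1000000 in
theorem no_eigenfunction_eq_P_pow_zP' (P : ℂ → ℝ) (n : ℕ)
    (hsmooth : ContDiff ℝ (⊤ : ℕ∞) P) (hP0 : P 0 = 0)
    (hpos : ∀ᶠ z in 𝓝 (0 : ℂ), z ≠ 0 → 0 < P z)
    (hflat : ∀ N : ℕ, Tendsto (fun z : ℂ => P z / ‖z‖ ^ N) (𝓝[≠] 0) (𝓝 0)) :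
    ¬ ∃ (a b : ℂ) (ε₀ : ℝ) (γ : ℂ → ℝ),
        a.re ≠ 0 ∧ b ≠ 0 ∧ 0 < ε₀ ∧
        Tendsto γ (𝓝[≠] 0) (𝓝 0) ∧
        ∀ z : ℂ, 0 < ‖z‖ → ‖z‖ < ε₀ →
          (a * ((P z : ℂ)) ^ (n + 1) + b * z * wirtingerDeriv P z).re
            = γ z * (P z) ^ (n + 1) := by
  rintro ⟨a, b, ε₀, γ, ha, hb, hε₀, hγ, heq⟩
  have hare : (0:ℝ) < |a.re| := abs_pos.mpr ha
  -- bound on γ near 0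
  have hγ' : ∀ᶠ z in 𝓝 (0:ℂ), z ≠ 0 → |γ z| ≤ |a.re| / 2 := by
    have h2 : ∀ᶠ z in 𝓝[≠] (0:ℂ), |γ z| ≤ |a.re|/2 := by
      filter_upwards [hγ (Metric.closedBall_mem_nhds 0 (by positivity : (0:ℝ) < |a.re|/2))] with z hz
      simpa [Real.dist_eq] using hz
    exact eventually_nhdsWithin_iff.mp h2
  have hP1 : ∀ᶠ z in 𝓝 (0:ℂ), P z ≤ 1 := by
    have hc : Tendsto P (𝓝 (0:ℂ)) (𝓝 0) := by
      have := (hsmooth.continuous.continuousAt (x := (0:ℂ)))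
      rwa [ContinuousAt, hP0] at this
    filter_upwards [hc.eventually_lt_const (by norm_num : (0:ℝ) < 1)] with z hz using hz.le
  obtain ⟨r, hr, hball⟩ := Metric.eventually_nhds_iff.mp ((hpos.and hγ').and hP1)
  set ρ : ℝ := min r ε₀ with hρdef
  have hρ : 0 < ρ := lt_min hr hε₀
  set z₀ : ℂ := ((ρ/2 : ℝ) : ℂ) with hz₀def
  have hz₀ : ‖z₀‖ = ρ/2 := by
    rw [hz₀def, Complex.norm_real, Real.norm_eq_abs, abs_of_pos (by positivity)]
  have hz₀ne : z₀ ≠ 0 := by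
    simp only [hz₀def, ne_eq, Complex.ofReal_eq_zero]
    positivity
  -- main facts on the punctured small ball
  have hmain : ∀ z : ℂ, 0 < ‖z‖ → ‖z‖ ≤ ρ/2 →
      0 < P z ∧ P z ≤ 1 ∧ |γ z| ≤ |a.re|/2 ∧
      (b * z * wirtingerDeriv P z).re = (γ z - a.re) * P z ^ (n+1) := by
    intro z h0 h1
    have hz0 : z ≠ 0 := norm_pos_iff.mp h0
    have hzρ : ‖z‖ < ρ := lt_of_le_of_lt h1 (by linarith)
    have hzr : dist z 0 < r := by
      rw [dist_zero_right]; exact lt_of_lt_of_le hzρ (min_le_left _ _)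
    obtain ⟨⟨hp, hγz⟩, hP1z⟩ := hball hzr
    have hzε : ‖z‖ < ε₀ := lt_of_lt_of_le hzρ (min_le_right _ _)
    have h := heq z h0 hzε
    rw [Complex.add_re] at h
    have h2 : (a * ((P z : ℂ)) ^ (n+1)).re = a.re * P z ^ (n+1) := by
      simp [← Complex.ofReal_pow, Complex.mul_re]
    refine ⟨hp hz0, hP1z, hγz hz0, ?_⟩
    rw [h2] at h
    ring_nf
    ring_nf at h
    linarith
  -- derivative of P along the flow
  have flow_deriv : ∀ (σ : ℝ) (t : ℝ),
      0 < ‖z₀ * Complex.exp (((σ/2:ℝ):ℂ) * b * t)‖ →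
      ‖z₀ * Complex.exp (((σ/2:ℝ):ℂ) * b * t)‖ ≤ ρ/2 →
      HasDerivAt (fun s : ℝ => P (z₀ * Complex.exp (((σ/2:ℝ):ℂ) * b * s)))
        (σ * ((γ (z₀ * Complex.exp (((σ/2:ℝ):ℂ) * b * t)) - a.re)
            * P (z₀ * Complex.exp (((σ/2:ℝ):ℂ) * b * t)) ^ (n+1))) t := by
    intro σ t h0 h1
    have H := hasDerivAt_P_flow P hsmooth z₀ (((σ/2:ℝ):ℂ) * b) t
    set w := z₀ * Complex.exp (((σ/2:ℝ):ℂ) * b * t) with hw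
    have halg : 2 * wirtingerDeriv P w * ((((σ/2:ℝ):ℂ) * b) * w)
        = (σ:ℂ) * (b * w * wirtingerDeriv P w) := by push_cast; ring
    have := (hmain w h0 h1).2.2.2
    convert H using 1
    rw [halg, Complex.re_ofReal_mul, this]
  -- norm of the flow
  have hwnorm : ∀ (σ : ℝ) (t : ℝ),
      ‖z₀ * Complex.exp (((σ/2:ℝ):ℂ) * b * t)‖ = (ρ/2) * Real.exp (σ/2 * b.re * t) := by
    intro σ t
    rw [norm_mul, hz₀, Complex.norm_exp]
    congr 2
    simp [Complex.mul_re]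
  rcases eq_or_ne b.re 0 with hbre | hbre
  · -- periodic case: b.re = 0
    have hbim : b.im ≠ 0 := fun h => hb (Complex.ext hbre h)
    have hbI : b = (b.im : ℂ) * Complex.I := by
      apply Complex.ext <;> simp [hbre]
    set τ : ℝ := if 0 < a.re then 1 else -1 with hτdef
    have hτ : τ = 1 ∨ τ = -1 := by
      by_cases h : 0 < a.re <;> simp [hτdef, h]
    set c : ℂ := ((τ/2:ℝ):ℂ) * b with hcdef
    set w : ℝ → ℂ := fun t => z₀ * Complex.exp (c * t) with hwdef
    have hwn : ∀ t, ‖w t‖ = ρ/2 := by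
      intro t
      rw [hwdef]
      simp only
      rw [hwnorm τ t, hbre]
      simp
    have hwpos : ∀ t, 0 < ‖w t‖ := fun t => by rw [hwn]; positivity
    have hder : ∀ t, HasDerivAt (fun s => P (w s))
        (τ * ((γ (w t) - a.re) * P (w t) ^ (n+1))) t :=
      fun t => flow_deriv τ t (hwpos t) (hwn t).le
    have hneg : ∀ t, τ * ((γ (w t) - a.re) * P (w t) ^ (n+1)) < 0 := by
      intro t
      obtain ⟨hp, _, hγb, _⟩ := hmain (w t) (hwpos t) (hwn t).le
      have hpow : 0 < P (w t) ^ (n+1) := pow_pos hp _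
      have habs := abs_le.mp hγb
      rcases lt_or_gt_of_ne ha with h | h
      · have hτeq : τ = -1 := if_neg (by linarith)
        rw [hτeq, abs_of_neg h] at *
        nlinarith [habs.1, hpow]
      · have hτeq : τ = 1 := if_pos h
        rw [hτeq, abs_of_pos h] at *
        nlinarith [habs.2, hpow]
    set T : ℝ := 4 * Real.pi / |b.im| with hTdef
    have hT : 0 < T := by
      have := Real.pi_pos
      have h2 : 0 < |b.im| := abs_pos.mpr hbim
      positivity
    have hexpT : Complex.exp (c * (T:ℂ)) = 1 := by
      rw [hcdef, hbI]
      have hs : τ * (b.im / |b.im|) = 1 ∨ τ * (b.im / |b.im|) = -1 := by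
        rcases hτ with h | h <;> rw [h] <;> rcases lt_or_gt_of_ne hbim with h2 | h2
        · right; rw [abs_of_neg h2]; field_simp
        · left; rw [abs_of_pos h2]; field_simp
        · left; rw [abs_of_neg h2]; field_simp
        · right; rw [abs_of_pos h2]; field_simp
      have key : (((τ/2:ℝ):ℂ) * ((b.im:ℂ) * Complex.I) * ((T : ℝ):ℂ))
          = ((τ * (b.im / |b.im|) : ℝ):ℂ) * (2 * Real.pi * Complex.I) := by
        rw [hTdef]; push_cast; ring
      rw [key]
      rcases hs with h | h <;> rw [h]
      · push_cast
        rw [one_mul, Complex.exp_two_pi_mul_I]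
      · push_cast
        rw [show (-1 : ℂ) * (2 * Real.pi * Complex.I) = -(2 * Real.pi * Complex.I) by ring,
          Complex.exp_neg, Complex.exp_two_pi_mul_I, inv_one]
    have hwT : w T = w 0 := by
      rw [hwdef]
      simp only
      rw [hexpT]
      simp
    have hcontg : Continuous fun s : ℝ => P (w s) := by
      apply hsmooth.continuous.comp
      rw [hwdef]
      fun_prop
    have hanti : StrictAntiOn (fun s => P (w s)) (Set.Icc 0 T) :=
      strictAntiOn_of_deriv_neg (convex_Icc 0 T) hcontg.continuousOn
        (fun x _ => by rw [(hder x).deriv]; exact hneg x)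
    have hlt := hanti (Set.left_mem_Icc.mpr hT.le) (Set.right_mem_Icc.mpr hT.le) hT
    simp only [] at hlt
    rw [hwT] at hlt
    exact lt_irrefl _ hlt
  · -- spiral case: b.re ≠ 0
    have hbabs : 0 < |b.re| := abs_pos.mpr hbre
    set σ : ℝ := if b.re < 0 then 1 else -1 with hσdef
    have hσ1 : σ = 1 ∨ σ = -1 := by
      by_cases h : b.re < 0 <;> simp [hσdef, h]
    set κ : ℝ := |b.re|/2 with hκdef
    have hκ : 0 < κ := by positivity
    have hσb : σ/2 * b.re = -κ := by
      rcases lt_or_gt_of_ne hbre with h | h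
      · rw [hσdef, hκdef, if_pos h, abs_of_neg h]; ring
      · rw [hσdef, hκdef, if_neg (not_lt.mpr h.le), abs_of_pos h]; ring
    set c : ℂ := ((σ/2:ℝ):ℂ) * b with hcdef
    set w : ℝ → ℂ := fun t => z₀ * Complex.exp (c * t) with hwdef
    have hwn : ∀ t, ‖w t‖ = ρ/2 * Real.exp (-(κ*t)) := by
      intro t
      rw [hwdef]
      simp only
      rw [hwnorm σ t, show σ/2 * b.re * t = -(κ*t) by rw [hσb]; ring]
    have hwpos : ∀ t, 0 < ‖w t‖ := fun t => by rw [hwn]; positivity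
    have hwle : ∀ t, 0 ≤ t → ‖w t‖ ≤ ρ/2 := by
      intro t ht
      rw [hwn]
      have h1 : Real.exp (-(κ*t)) ≤ 1 := Real.exp_le_one_iff.mpr (by nlinarith)
      nlinarith
    set g : ℝ → ℝ := fun t => P (w t) with hgdef
    have hder : ∀ t, 0 ≤ t → HasDerivAt g (σ * ((γ (w t) - a.re) * g t ^ (n+1))) t :=
      fun t ht => flow_deriv σ t (hwpos t) (hwle t ht)
    set C : ℝ := 3*|a.re|/2 with hCdef
    have hC : 0 < C := by positivity
    have hgpos : ∀ t, 0 ≤ t → 0 < g t := fun t ht => (hmain (w t) (hwpos t) (hwle t ht)).1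
    have hbound : ∀ t, 0 ≤ t → -(C * g t) ≤ σ * ((γ (w t) - a.re) * g t ^ (n+1)) := by
      intro t ht
      obtain ⟨hp, hle1, hγb, _⟩ := hmain (w t) (hwpos t) (hwle t ht)
      have hpow : 0 < P (w t) ^ (n+1) := pow_pos hp _
      have hpowle : P (w t) ^ (n+1) ≤ P (w t) := by
        calc P (w t) ^ (n+1) = P (w t) ^ n * P (w t) := pow_succ _ _
          _ ≤ 1 * P (w t) := mul_le_mul_of_nonneg_right (pow_le_one₀ hp.le hle1) hp.le
          _ = P (w t) := one_mul _
      have habs := abs_le.mp hγb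
      have h1 : |γ (w t) - a.re| ≤ C := by
        rw [hCdef]
        have h2 := abs_sub (γ (w t)) a.re
        have h3 := abs_le.mpr habs
        linarith [abs_le.mp h3]
      have h4 := abs_le.mp h1
      rcases hσ1 with h | h <;> rw [h] <;> nlinarith [hpow, hpowle]
    set F : ℝ → ℝ := fun t => g t * Real.exp (C*t) with hFdef
    have hFder : ∀ t, 0 ≤ t → HasDerivAt F
        (σ * ((γ (w t) - a.re) * g t ^ (n+1)) * Real.exp (C*t)
          + g t * (Real.exp (C*t) * C)) t := by
      intro t ht
      have he : HasDerivAt (fun s : ℝ => Real.exp (C*s)) (Real.exp (C*t) * C) t := by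
        simpa using ((hasDerivAt_id t).const_mul C).exp
      exact (hder t ht).mul he
    have hFmono : MonotoneOn F (Set.Ici 0) := by
      apply monotoneOn_of_deriv_nonneg (convex_Ici 0)
      · apply Continuous.continuousOn
        apply Continuous.mul
        · apply hsmooth.continuous.comp
          rw [hwdef]; fun_prop
        · fun_prop
      · intro x hx
        rw [interior_Ici] at hx
        exact ((hFder x (le_of_lt hx)).differentiableAt).differentiableWithinAt
      · intro x hx
        rw [interior_Ici] at hx
        rw [(hFder x (le_of_lt hx)).deriv]
        have h1 := hbound x (le_of_lt hx)
        have he := Real.exp_pos (C*x)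
        have h2 := hgpos x (le_of_lt hx)
        nlinarith
    obtain ⟨N, hN⟩ := exists_nat_ge (C/κ)
    have hCN : C ≤ N * κ := (div_le_iff₀ hκ).mp hN
    have hwt : Tendsto w atTop (𝓝[≠] (0:ℂ)) := by
      rw [tendsto_nhdsWithin_iff]
      constructor
      · rw [tendsto_zero_iff_norm_tendsto_zero]
        have h1 : Tendsto (fun t : ℝ => κ * t) atTop atTop :=
          Tendsto.const_mul_atTop hκ tendsto_id
        have h2 : Tendsto (fun t : ℝ => -(κ * t)) atTop atBot :=
          tendsto_neg_atTop_atBot.comp h1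
        have h3 := (Real.tendsto_exp_atBot.comp h2).const_mul (ρ/2)
        simp only [Function.comp] at h3
        rw [mul_zero] at h3
        have : (fun t => ‖w t‖) = fun t => ρ/2 * Real.exp (-(κ*t)) := funext hwn
        rw [this]
        exact h3
      · filter_upwards with t
        simp only [Set.mem_compl_iff, Set.mem_singleton_iff, hwdef]
        exact mul_ne_zero hz₀ne (Complex.exp_ne_zero _)
    have hflatN := (hflat N).comp hwt
    have hg0 : 0 < g 0 := hgpos 0 le_rfl
    have hδ : 0 < g 0 / (ρ/2)^N := by positivity
    obtain ⟨t, hlt, ht0⟩ :=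
      ((hflatN.eventually_lt_const hδ).and (eventually_ge_atTop (0:ℝ))).exists
    have hF := hFmono Set.self_mem_Ici (Set.mem_Ici.mpr ht0) ht0
    have hF0 : F 0 = g 0 := by simp [hFdef]
    rw [hF0] at hF
    have hgt : g 0 * Real.exp (-(C*t)) ≤ g t := by
      rw [Real.exp_neg, ← div_eq_mul_inv, div_le_iff₀ (Real.exp_pos _)]
      exact hF
    have hnormN : ‖w t‖^N = (ρ/2)^N * Real.exp (-(κ*t))^N := by rw [hwn, mul_pow]
    have hexpN : Real.exp (-(κ*t))^N = Real.exp (-((N:ℝ)*(κ*t))) := by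
      rw [← Real.exp_nat_mul]
      ring_nf
    have hle2 : g 0 / (ρ/2)^N ≤ P (w t) / ‖w t‖^N := by
      rw [div_le_div_iff₀ (by positivity) (pow_pos (hwpos t) N)]
      rw [hnormN, hexpN]
      have hmonoexp : Real.exp (-((N:ℝ)*(κ*t))) ≤ Real.exp (-(C*t)) :=
        Real.exp_le_exp.mpr (by nlinarith)
      have hee := Real.exp_pos (-((N:ℝ)*(κ*t)))
      have hrr : (0:ℝ) < (ρ/2)^N := by positivity
      calc g 0 * ((ρ/2)^N * Real.exp (-((N:ℝ)*(κ*t))))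
          = (g 0 * Real.exp (-((N:ℝ)*(κ*t)))) * (ρ/2)^N := by ring
        _ ≤ (g 0 * Real.exp (-(C*t))) * (ρ/2)^N :=
            mul_le_mul_of_nonneg_right (mul_le_mul_of_nonneg_left hmonoexp hg0.le) hrr.le
        _ ≤ g t * (ρ/2)^N := mul_le_mul_of_nonneg_right hgt hrr.le
        _ = P (w t) * (ρ/2)^N := rfl
    simp only [Function.comp] at hlt
    exact absurd hlt (not_lt.mpr hle2)
end

section
/- Let u : ℝ² → ℝ be differentiable, let α, β ∈ ℝ, and suppose (αx - βy)·∂u/∂x + (βx + αy)·∂u/∂y = -1 + γ₁(x,y) on a punctured neighborhood of the origin, where |γ₁| ≤ 1/2. If α = 0, then a contradiction follows; i.e., there is no such u. (Concretely: along the circle x(t) = r cos t, y(t) = r sin t for small r > 0, the function g(t) = u(x(t), y(t)) satisfies g(2π) = g(0) but |g(2π) - g(0)| ≥ π.) -/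
/-!
With `α = 0` the equation says that the derivative of `u` along the rotation field `(-y, x)`,
multiplied by `β`, equals `-1 + γ₁ ≤ -1/2`; in particular it never vanishes. On a small circle
`t ↦ (r cos t, r sin t)` that derivative is exactly the derivative of `t ↦ u (r cos t, r sin t)`,
a `2π`-periodic function, which by Rolle's theorem has a critical point; there the equation
forces `γ₁ = 1`.
-/

open Real Metric

theorem ContinuousLinearMap.apply_prodMk_eq {F : Type*} [NormedAddCommGroup F] [NormedSpace ℝ F]
    (L : ℝ × ℝ →L[ℝ] F) (a b : ℝ) : L (a, b) = a • L (1, 0) + b • L (0, 1) := by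
  rw [← L.map_smul, ← L.map_smul, ← map_add]
  simp

theorem mk_cos_sin_mem_ball_sdiff_zero {r ε : ℝ} (hr : 0 < r) (hrε : r < ε) (t : ℝ) :
    (r * cos t, r * sin t) ∈ ball (0 : ℝ × ℝ) ε \ {0} := by
  refine ⟨?_, fun h => ?_⟩
  · rw [mem_ball, dist_zero_right, Prod.norm_def, Real.norm_eq_abs, Real.norm_eq_abs,
      abs_mul, abs_mul, abs_of_pos hr]
    refine max_lt ?_ ?_
    · nlinarith [abs_cos_le_one t]
    · nlinarith [abs_sin_le_one t]
  · simp only [Set.mem_singleton_iff, Prod.mk_eq_zero, mul_eq_zero, hr.ne', false_or] at h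
    simpa [h.1, h.2] using sin_sq_add_cos_sq t

theorem hasDerivAt_comp_mk_cos_sin {F : Type*} [NormedAddCommGroup F] [NormedSpace ℝ F]
    {u : ℝ × ℝ → F} {r t : ℝ} (hu : DifferentiableAt ℝ u (r * cos t, r * sin t)) :
    HasDerivAt (fun s => u (r * cos s, r * sin s))
      ((-(r * sin t)) • fderiv ℝ u (r * cos t, r * sin t) (1, 0)
        + (r * cos t) • fderiv ℝ u (r * cos t, r * sin t) (0, 1)) t := by
  have hcircle : HasDerivAt (fun s => (r * cos s, r * sin s)) (-(r * sin t), r * cos t) t := by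
    simpa using ((hasDerivAt_cos t).const_mul r).prodMk ((hasDerivAt_sin t).const_mul r)
  rw [← ContinuousLinearMap.apply_prodMk_eq]
  exact hu.hasFDerivAt.comp_hasDerivAt t hcircle

theorem exists_angular_deriv_eq_zero {u : ℝ × ℝ → ℝ} {r : ℝ}
    (hu : ∀ t, DifferentiableAt ℝ u (r * cos t, r * sin t)) :
    ∃ t, -(r * sin t) * fderiv ℝ u (r * cos t, r * sin t) (1, 0)
      + r * cos t * fderiv ℝ u (r * cos t, r * sin t) (0, 1) = 0 := by
  have hderiv := fun t => hasDerivAt_comp_mk_cos_sin (hu t)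
  obtain ⟨t, -, ht⟩ := exists_hasDerivAt_eq_zero two_pi_pos
    (fun t _ => (hderiv t).continuousAt.continuousWithinAt)
    (by simp) (fun t _ => hderiv t)
  exact ⟨t, ht⟩

theorem no_solution_rotational_pde (u γ₁ : ℝ × ℝ → ℝ) (α β ε : ℝ)
    (hε : 0 < ε) (hα : α = 0)
    (hdiff : ∀ p ∈ Metric.ball (0 : ℝ × ℝ) ε \ {0}, DifferentiableAt ℝ u p)
    (hγ : ∀ p ∈ Metric.ball (0 : ℝ × ℝ) ε \ {0}, |γ₁ p| ≤ 1 / 2)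
    (hpde : ∀ p ∈ Metric.ball (0 : ℝ × ℝ) ε \ {0},
      (α * p.1 - β * p.2) * fderiv ℝ u p (1, 0)
        + (β * p.1 + α * p.2) * fderiv ℝ u p (0, 1) = -1 + γ₁ p) :
    False := by
  subst hα
  have hcircle := mk_cos_sin_mem_ball_sdiff_zero (half_pos hε) (half_lt_self hε)
  obtain ⟨t, ht⟩ := exists_angular_deriv_eq_zero fun t => hdiff _ (hcircle t)
  have hγ_eq_one : γ₁ (ε / 2 * cos t, ε / 2 * sin t) = 1 := by
    linear_combination -hpde _ (hcircle t) + β * ht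
  have hγ_le := hγ _ (hcircle t)
  norm_num [hγ_eq_one] at hγ_le
end

section
/- Let x_n = (-t_n + 1)/(-t_n - 1) where t_n → +∞ (so x_n → 1⁻), let x₀ ∈ (-1,1) and z ∈ Δ. Then lim_{n→∞} [d(z, x_n) - d(x₀, x_n)] = ln( ((1 - x₀²)·|1 - z|²) / ((1 - |z|²)·|1 - x₀|²) ), where d(a,b) = ln((|1-\bar{a}b|+|a-b|)/(|1-\bar{a}b|-|a-b|)) is the hyperbolic distance on the unit disk. -/
/-! Since `|1 - ā w|² - |a - w|² = (1 - |a|²)(1 - |w|²)`, the distance splits as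
`d(a, w) = log ((|1 - ā w| + |a - w|)² / (1 - |a|²)) - log (1 - |w|²)`.
The first term is continuous in `w` up to the boundary point `1`, where it equals
`log (4 |1 - a|² / (1 - |a|²))`, and the second term does not depend on `a`. Hence
`d(z, w) - d(x₀, w)` converges as `w → 1` to the difference of these values, the logarithm of
a ratio of Poisson kernels. The points `x n` tend to `1` inside the disk. -/

open Filter Topology

/-- The hyperbolic distance on the unit disk:
`d(a,b) = ln((|1 - conj a * b| + |a - b|)/(|1 - conj a * b| - |a - b|))`. -/
noncomputable def hypDist (a b : ℂ) : ℝ :=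
  Real.log ((‖1 - (starRingEnd ℂ) a * b‖ + ‖a - b‖) / (‖1 - (starRingEnd ℂ) a * b‖ - ‖a - b‖))

open Metric

theorem norm_one_sub_conj_mul_sq_sub_norm_sub_sq (a b : ℂ) :
    ‖1 - (starRingEnd ℂ) a * b‖ ^ 2 - ‖a - b‖ ^ 2 = (1 - ‖a‖ ^ 2) * (1 - ‖b‖ ^ 2) := by
  simp only [← Complex.normSq_eq_norm_sq, Complex.normSq_apply, Complex.sub_re,
    Complex.sub_im, Complex.mul_re, Complex.mul_im, Complex.conj_re, Complex.conj_im,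
    Complex.one_re, Complex.one_im]
  ring

theorem one_sub_norm_sq_pos {a : ℂ} (ha : ‖a‖ < 1) : 0 < 1 - ‖a‖ ^ 2 := by
  nlinarith [norm_nonneg a]

theorem one_sub_ne_zero_of_norm_lt_one {a : ℂ} (ha : ‖a‖ < 1) : 1 - a ≠ 0 :=
  sub_ne_zero.mpr (by rintro rfl; simp at ha)

theorem hypDist_eq_log_sub_log {a b : ℂ} (ha : ‖a‖ < 1) (hb : ‖b‖ < 1) :
    hypDist a b = Real.log ((‖1 - (starRingEnd ℂ) a * b‖ + ‖a - b‖) ^ 2 / (1 - ‖a‖ ^ 2))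
      - Real.log (1 - ‖b‖ ^ 2) := by
  set A := ‖1 - (starRingEnd ℂ) a * b‖
  set B := ‖a - b‖
  have hAB : A ^ 2 - B ^ 2 = (1 - ‖a‖ ^ 2) * (1 - ‖b‖ ^ 2) :=
    norm_one_sub_conj_mul_sq_sub_norm_sub_sq a b
  have hα := one_sub_norm_sq_pos ha
  have hβ := one_sub_norm_sq_pos hb
  have hBA : B < A := by
    refine lt_of_pow_lt_pow_left₀ 2 (norm_nonneg _) ?_
    nlinarith [mul_pos hα hβ]
  have hApB : 0 < A + B := by linarith [norm_nonneg (a - b)]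
  rw [hypDist, ← Real.log_div (by positivity) hβ.ne']
  congr 1
  rw [div_div, ← hAB, div_eq_div_iff (by linarith) (by nlinarith)]
  ring

theorem tendsto_log_add_sq_div_one_sub_norm_sq {a : ℂ} (ha : ‖a‖ < 1) :
    Tendsto (fun w => Real.log ((‖1 - (starRingEnd ℂ) a * w‖ + ‖a - w‖) ^ 2 / (1 - ‖a‖ ^ 2)))
      (𝓝 1) (𝓝 (Real.log (4 * ‖1 - a‖ ^ 2 / (1 - ‖a‖ ^ 2)))) := by
  have ha1 : 1 - a ≠ 0 := one_sub_ne_zero_of_norm_lt_one ha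
  have hα := one_sub_norm_sq_pos ha
  have hval : (‖1 - (starRingEnd ℂ) a * 1‖ + ‖a - 1‖) ^ 2 / (1 - ‖a‖ ^ 2)
      = 4 * ‖1 - a‖ ^ 2 / (1 - ‖a‖ ^ 2) := by
    have hconj : ‖1 - (starRingEnd ℂ) a‖ = ‖1 - a‖ := by
      rw [← Complex.norm_conj, map_sub, map_one, Complex.conj_conj]
    rw [mul_one, hconj, norm_sub_rev a]
    ring
  have hcont : ContinuousAt
      (fun w => Real.log ((‖1 - (starRingEnd ℂ) a * w‖ + ‖a - w‖) ^ 2 / (1 - ‖a‖ ^ 2))) 1 := by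
    refine ContinuousAt.log (by fun_prop) ?_
    rw [hval]
    positivity
  simpa only [hval] using hcont.tendsto

theorem tendsto_hypDist_sub_hypDist {a b : ℂ} (ha : ‖a‖ < 1) (hb : ‖b‖ < 1) :
    Tendsto (fun w => hypDist a w - hypDist b w) (𝓝[ball 0 1] 1)
      (𝓝 (Real.log ((1 - ‖b‖ ^ 2) * ‖1 - a‖ ^ 2 / ((1 - ‖a‖ ^ 2) * ‖1 - b‖ ^ 2)))) := by
  have ha1 : 1 - a ≠ 0 := one_sub_ne_zero_of_norm_lt_one ha
  have hb1 : 1 - b ≠ 0 := one_sub_ne_zero_of_norm_lt_one hb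
  have hα := one_sub_norm_sq_pos ha
  have hβ := one_sub_norm_sq_pos hb
  have hlim := ((tendsto_log_add_sq_div_one_sub_norm_sq ha).sub
    (tendsto_log_add_sq_div_one_sub_norm_sq hb)).mono_left (nhdsWithin_le_nhds (s := ball 0 1))
  have hval : Real.log (4 * ‖1 - a‖ ^ 2 / (1 - ‖a‖ ^ 2))
      - Real.log (4 * ‖1 - b‖ ^ 2 / (1 - ‖b‖ ^ 2))
      = Real.log ((1 - ‖b‖ ^ 2) * ‖1 - a‖ ^ 2 / ((1 - ‖a‖ ^ 2) * ‖1 - b‖ ^ 2)) := by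
    rw [← Real.log_div (by positivity) (by positivity)]
    congr 1
    field_simp
  rw [← hval]
  refine hlim.congr' (eventually_nhdsWithin_of_forall fun w hw => ?_)
  rw [mem_ball_zero_iff] at hw
  dsimp only
  rw [hypDist_eq_log_sub_log ha hw, hypDist_eq_log_sub_log hb hw]
  ring

theorem tendsto_neg_add_one_div_neg_sub_one_atTop :
    Tendsto (fun s : ℝ => (-s + 1) / (-s - 1)) atTop (𝓝[Set.Ioo (-1) 1] 1) := by
  have hform : ∀ s : ℝ, 0 < s → (-s + 1) / (-s - 1) = 1 - 2 / (s + 1) := fun s hs => by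
    have : -s - 1 ≠ 0 := by linarith
    have : s + 1 ≠ 0 := by linarith
    field_simp
    ring
  have hlim : Tendsto (fun s : ℝ => 1 - 2 / (s + 1)) atTop (𝓝 1) := by
    simpa using (tendsto_const_nhds (x := (1 : ℝ))).sub
      ((tendsto_const_nhds (x := (2 : ℝ))).div_atTop
        (tendsto_atTop_add_const_right atTop (1 : ℝ) tendsto_id))
  refine tendsto_nhdsWithin_iff.mpr ⟨hlim.congr' ?_, ?_⟩ <;>
    filter_upwards [eventually_gt_atTop 0] with s hs
  · exact (hform s hs).symm
  · rw [hform s hs, Set.mem_Ioo]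
    have : 0 < 2 / (s + 1) := by positivity
    have : 2 / (s + 1) < 2 := by rw [div_lt_iff₀ (by linarith)]; linarith
    constructor <;> linarith

theorem horosphere_limit (t : ℕ → ℝ) (ht : Tendsto t atTop atTop)
    (x : ℕ → ℝ) (hx : ∀ n, x n = (-t n + 1) / (-t n - 1))
    (x₀ : ℝ) (hx₀ : x₀ ∈ Set.Ioo (-1 : ℝ) 1) (z : ℂ) (hz : ‖z‖ < 1) :
    Tendsto (fun n => hypDist z ((x n : ℝ) : ℂ) - hypDist (x₀ : ℂ) ((x n : ℝ) : ℂ))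
      atTop
      (𝓝 (Real.log ((1 - x₀ ^ 2) * ‖1 - z‖ ^ 2
        / ((1 - ‖z‖ ^ 2) * ‖1 - (x₀ : ℂ)‖ ^ 2)))) := by
  have hnorm : ∀ y : ℝ, ‖(y : ℂ)‖ = |y| := fun y => by rw [Complex.norm_real, Real.norm_eq_abs]
  have hofReal : Tendsto ((↑) : ℝ → ℂ) (𝓝[Set.Ioo (-1) 1] 1) (𝓝[ball 0 1] 1) :=
    Complex.continuous_ofReal.continuousWithinAt.tendsto_nhdsWithin fun y hy => by
      rw [mem_ball_zero_iff, hnorm, abs_lt]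
      exact hy
  have hxn : Tendsto (fun n => (x n : ℂ)) atTop (𝓝[ball 0 1] 1) := by
    simp only [hx]
    exact hofReal.comp (tendsto_neg_add_one_div_neg_sub_one_atTop.comp ht)
  have hx₀' : ‖(x₀ : ℂ)‖ < 1 := by rw [hnorm, abs_lt]; exact hx₀
  simpa only [Function.comp_def, hnorm, sq_abs] using (tendsto_hypDist_sub_hypDist hz hx₀').comp hxn
end
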